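/- Let σ(t) = 1/(1 + exp(−t)), let N > 0, γ > 0, δ > 0, T > 0, and let x : [0,T] → ℝ be differentiable with x(0) = 0 and x′(t) = exp(−Nδt/T)·(σ(γNt/T) − x(t)) for all t ∈ [0,T]. Define β(s) = (−1/(Nδ))·log(exp(−Nδ) − (Nδ/T)·log s) for s ∈ (0,1] and τ₀ = exp(−(T/(Nδ))·(1 − exp(−Nδ))). Then the total variational distance decomposes as σ(Nγ) − x(T) = σ(Nγ)·τ₀ + ∫_{τ₀}^{1} (σ(Nγ) − σ(Nγ·β(τ))) dτ. -/

import Mathlib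

/-!
With `A(t) = ∫₀ᵗ exp(-Nδs/T) ds` as integrating factor, the ODE integrates to
`x(T) = ∫₀ᵀ exp(A(t) - A(T)) A'(t) σ(γNt/T) dt`. The substitution `τ = exp(A(t) - A(T))` maps
`[0, T]` onto `[τ₀, 1]` and is inverted by `t = T β(τ)`, so `x(T) = ∫_{τ₀}^1 σ(Nγ β(τ)) dτ`;
subtracting this from `σ(Nγ) = σ(Nγ) τ₀ + ∫_{τ₀}^1 σ(Nγ) dτ` gives the decomposition.
-/

/-- The logistic sigmoid function σ(t) = 1/(1 + exp(−t)). -/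
noncomputable def logistic (t : ℝ) : ℝ := 1 / (1 + Real.exp (-t))

open Real Set intervalIntegral

theorem continuous_logistic : Continuous logistic :=
  continuous_const.div (by fun_prop) fun t => (add_pos one_pos (exp_pos _)).ne'

theorem eq_integral_of_hasDerivAt_linear {x R r f : ℝ → ℝ} {a b : ℝ}
    (hR : ∀ t ∈ uIcc a b, HasDerivAt R (r t) t) (hr : ContinuousOn r (uIcc a b))
    (hf : ContinuousOn f (uIcc a b))
    (hx : ∀ t ∈ uIcc a b, HasDerivAt x (r t * (f t - x t)) t) :
    x b = exp (R a - R b) * x a + ∫ t in a..b, exp (R t - R b) * r t * f t := by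
  have hderiv : ∀ t ∈ uIcc a b, HasDerivAt (fun t => exp (R t - R b) * x t)
      (exp (R t - R b) * r t * f t) t := fun t ht =>
    ((((hR t ht).sub_const (R b)).exp).mul (hx t ht)).congr_deriv (by ring)
  have hint : IntervalIntegrable (fun t => exp (R t - R b) * r t * f t) MeasureTheory.volume a b :=
    ((((HasDerivAt.continuousOn hR).sub continuousOn_const).rexp).mul hr |>.mul
      hf).intervalIntegrable
  rw [integral_eq_sub_of_hasDerivAt hderiv hint, sub_self, exp_zero]
  ring

noncomputable def annealClock (a T t : ℝ) : ℝ := T / a * (1 - exp (-(a * t / T)))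

noncomputable def annealSchedule (a T s : ℝ) : ℝ := -1 / a * log (exp (-a) - a / T * log s)

section Anneal

variable {a T : ℝ}

theorem hasDerivAt_annealClock (ha : a ≠ 0) (hT : T ≠ 0) (t : ℝ) :
    HasDerivAt (annealClock a T) (exp (-(a * t / T))) t := by
  have h := ((((hasDerivAt_id t).const_mul a).div_const T).neg.exp.const_sub 1).const_mul (T / a)
  refine h.congr_deriv ?_
  field_simp
  simp

theorem annealClock_zero : annealClock a T 0 = 0 := by
  simp [annealClock]

theorem annealClock_self (hT : T ≠ 0) : annealClock a T T = T / a * (1 - exp (-a)) := by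
  rw [annealClock, mul_div_cancel_right₀ a hT]

theorem monotone_annealClock (ha : 0 ≤ a) (hT : 0 ≤ T) : Monotone (annealClock a T) := by
  intro s t hst
  unfold annealClock
  gcongr

theorem uIcc_exp_neg_annealClock_self_subset (ha : 0 ≤ a) (hT : 0 ≤ T) :
    uIcc (exp (-annealClock a T T)) 1 ⊆ Ioc 0 1 := by
  have hle : exp (-annealClock a T T) ≤ 1 := exp_le_one_iff.mpr
    (neg_nonpos.mpr (annealClock_zero ▸ monotone_annealClock ha hT hT))
  rw [uIcc_of_le hle]
  exact fun τ hτ => ⟨(exp_pos _).trans_le hτ.1, hτ.2⟩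

theorem annealSchedule_exp_annealClock_sub (ha : a ≠ 0) (hT : T ≠ 0) (t : ℝ) :
    annealSchedule a T (exp (annealClock a T t - annealClock a T T)) = t / T := by
  have h : exp (-a) - a / T * (annealClock a T t - annealClock a T T) = exp (-(a * t / T)) := by
    rw [annealClock_self hT, annealClock]
    field_simp
    ring
  rw [annealSchedule, log_exp, h, log_exp]
  field_simp

theorem continuousOn_annealSchedule (ha : 0 ≤ a) (hT : 0 ≤ T) :
    ContinuousOn (annealSchedule a T) (Ioc 0 1) := by
  have hpos : ∀ s ∈ Ioc (0 : ℝ) 1, 0 < exp (-a) - a / T * log s := fun s hs => by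
    have : a / T * log s ≤ 0 := mul_nonpos_of_nonneg_of_nonpos (by positivity)
      (log_nonpos hs.1.le hs.2)
    linarith [exp_pos (-a)]
  refine continuousOn_const.mul (ContinuousOn.log ?_ fun s hs => (hpos s hs).ne')
  exact continuousOn_const.sub (continuousOn_const.mul
    (continuousOn_log.mono fun s hs => hs.1.ne'))

theorem integral_comp_exp_annealClock (ha : 0 < a) (hT : 0 < T) {f : ℝ → ℝ} (hf : Continuous f) :
    ∫ t in 0..T, exp (annealClock a T t - annealClock a T T) * exp (-(a * t / T)) * f (t / T) =
      ∫ τ in exp (-annealClock a T T)..1, f (annealSchedule a T τ) := by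
  set φ : ℝ → ℝ := fun t => exp (annealClock a T t - annealClock a T T) with hφ_def
  have hφ : ∀ t, HasDerivAt φ (φ t * exp (-(a * t / T))) t := fun t =>
    ((hasDerivAt_annealClock ha.ne' hT.ne' t).sub_const _).exp
  have hφ0 : φ 0 = exp (-annealClock a T T) := by simp [hφ_def, annealClock_zero]
  have hφT : φ T = 1 := by simp [hφ_def]
  have hmono : Monotone φ := fun s t hst =>
    exp_le_exp.mpr (sub_le_sub_right (monotone_annealClock ha.le hT.le hst) _)
  have himage : φ '' uIcc 0 T ⊆ Ioc 0 1 :=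
    hmono.image_uIcc_subset.trans (hφ0 ▸ hφT ▸ uIcc_exp_neg_annealClock_self_subset ha.le hT.le)
  have hsubst := integral_comp_mul_deriv' (g := fun τ => f (annealSchedule a T τ)) (fun t _ => hφ t)
    ((HasDerivAt.continuousOn fun t _ => hφ t).mul (by fun_prop))
    ((hf.comp_continuousOn (continuousOn_annealSchedule ha.le hT.le)).mono himage)
  rw [← hφ0, ← hφT, ← hsubst]
  refine integral_congr fun t _ => ?_
  simp only [Function.comp, hφ_def, annealSchedule_exp_annealClock_sub ha.ne' hT.ne']
  ring

end Anneal

theorem stmt_9_general (N γ δ T : ℝ) (hN : 0 < N) (hδ : 0 < δ) (hT : 0 < T)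
    (x : ℝ → ℝ)
    (hx0 : x 0 = 0)
    (hode : ∀ t ∈ Set.Icc (0:ℝ) T, HasDerivAt x
      (Real.exp (-(N * δ * t / T)) * (logistic (γ * N * t / T) - x t)) t)
    (β : ℝ → ℝ)
    (hβ : ∀ s ∈ Set.Ioc (0:ℝ) 1, β s =
      (-1 / (N * δ)) * Real.log (Real.exp (-(N * δ)) - (N * δ / T) * Real.log s))
    (τ₀ : ℝ)
    (hτ₀ : τ₀ = Real.exp (-(T / (N * δ)) * (1 - Real.exp (-(N * δ))))) :
    logistic (N * γ) - x T =
      logistic (N * γ) * τ₀ +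
        ∫ τ in τ₀..1, (logistic (N * γ) - logistic (N * γ * β τ)) := by
  have ha : 0 < N * δ := mul_pos hN hδ
  have hτ₀_clock : τ₀ = exp (-annealClock (N * δ) T T) := by
    rw [hτ₀, annealClock_self hT.ne', neg_mul]
  have hτ₀_mem : uIcc τ₀ 1 ⊆ Ioc 0 1 :=
    hτ₀_clock ▸ uIcc_exp_neg_annealClock_self_subset ha.le hT.le
  have hsol := eq_integral_of_hasDerivAt_linear (R := annealClock (N * δ) T)
    (f := fun t => logistic (N * γ * (t / T)))
    (fun t _ => hasDerivAt_annealClock ha.ne' hT.ne' t) (by fun_prop)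
    (continuous_logistic.comp (by fun_prop)).continuousOn
    (fun t ht => by
      rw [uIcc_of_le hT.le] at ht
      simpa only [mul_div_assoc', mul_comm N γ] using hode t ht)
  rw [hx0, mul_zero, zero_add, integral_comp_exp_annealClock ha hT
    (f := fun u => logistic (N * γ * u)) (continuous_logistic.comp (by fun_prop)),
    ← hτ₀_clock] at hsol
  have hβ_schedule : EqOn (fun τ => logistic (N * γ) - logistic (N * γ * β τ))
      (fun τ => logistic (N * γ) - logistic (N * γ * annealSchedule (N * δ) T τ)) (uIcc τ₀ 1) :=
    fun τ hτ => by dsimp only; rw [hβ τ (hτ₀_mem hτ), annealSchedule]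
  have hcont : ContinuousOn (fun τ => logistic (N * γ * annealSchedule (N * δ) T τ)) (uIcc τ₀ 1) :=
    continuous_logistic.comp_continuousOn
      (continuousOn_const.mul ((continuousOn_annealSchedule ha.le hT.le).mono hτ₀_mem))
  rw [integral_congr hβ_schedule, integral_sub intervalIntegrable_const hcont.intervalIntegrable,
    integral_const, smul_eq_mul, hsol]
  ring

/-- for the annealed dynamics x′(t) = exp(−Nδt/T)·(σ(γNt/T) − x(t))
with x(0) = 0, the total variational distance decomposes as
σ(Nγ) − x(T) = σ(Nγ)·τ₀ + ∫_{τ₀}^{1} (σ(Nγ) − σ(Nγ·β(τ))) dτ. -/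
theorem stmt_9 (N γ δ T : ℝ) (hN : 0 < N) (hγ : 0 < γ) (hδ : 0 < δ) (hT : 0 < T)
    (x : ℝ → ℝ)
    (hx0 : x 0 = 0)
    (hode : ∀ t ∈ Set.Icc (0:ℝ) T, HasDerivAt x
      (Real.exp (-(N * δ * t / T)) * (logistic (γ * N * t / T) - x t)) t)
    (β : ℝ → ℝ)
    (hβ : ∀ s ∈ Set.Ioc (0:ℝ) 1, β s =
      (-1 / (N * δ)) * Real.log (Real.exp (-(N * δ)) - (N * δ / T) * Real.log s))
    (τ₀ : ℝ)
    (hτ₀ : τ₀ = Real.exp (-(T / (N * δ)) * (1 - Real.exp (-(N * δ))))) :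
    logistic (N * γ) - x T =
      logistic (N * γ) * τ₀ +
        ∫ τ in τ₀..1, (logistic (N * γ) - logistic (N * γ * β τ)) :=
  stmt_9_general N γ δ T hN hδ hT x hx0 hode β hβ τ₀ hτ₀
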